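/- Let G_{∥v₀} be a well-initialized prefix-independent game with steady negotiation, let ε ≥ 0, and let λ be an ε-fixed point of the negotiation function. Then for every λ-consistent play ξ starting at v₀, there exists an ε-SPE σ̄ in G_{∥v₀} such that ⟨σ̄⟩_{v₀} = ξ. -/

import Mathlib

noncomputable section

open Filter

/-- Prepend a finite list to an infinite sequence. -/
def prependList {V : Type} (h : List V) (ρ : ℕ → V) : ℕ → V :=
  fun n => if hn : n < h.length then h.get ⟨n, hn⟩ else ρ (n - h.length)

/-- A (turn-based, multiplayer) game on a graph: a finite directed graph `(V, E)`
in which every vertex has an outgoing edge, a partition of the vertices among the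
players (given by `control`), and an outcome function `payoff : Π → V^ω → ℝ`. -/
structure GameStruct (P V : Type) where
  E : V → V → Prop
  total : ∀ v, ∃ w, E v w
  control : V → P
  payoff : P → (ℕ → V) → ℝ

namespace GameStruct

variable {P V : Type}

/-- A strategy: given the history before the current vertex and the current vertex,
choose a successor along an edge. -/
structure Strategy (G : GameStruct P V) where
  toFun : List V → V → V
  valid : ∀ h v, G.E v (toFun h v)

/-- A complete strategy profile. -/
abbrev Profile (G : GameStruct P V) := P → G.Strategy

def step (G : GameStruct P V) (σ : G.Profile) (p : List V × V) : List V × V :=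
  (p.1 ++ [p.2], (σ (G.control p.2)).toFun p.1 p.2)

/-- The play induced by the profile `σ` from vertex `v`, after the past history `h`. -/
def play (G : GameStruct P V) (σ : G.Profile) (h : List V) (v : V) : ℕ → V :=
  fun n => ((G.step σ)^[n] (h, v)).2

/-- An infinite path in the graph. -/
def IsPlay (G : GameStruct P V) (ρ : ℕ → V) : Prop := ∀ n, G.E (ρ n) (ρ (n + 1))

def IsPlayFrom (G : GameStruct P V) (v₀ : V) (ρ : ℕ → V) : Prop := ρ 0 = v₀ ∧ G.IsPlay ρ

/-- A history: a finite nonempty path. -/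
def IsHist (G : GameStruct P V) (H : List V) : Prop := H ≠ [] ∧ List.Chain' G.E H

/-- `hv` is a history of the initialized game `G_{∥v₀}` (here `h` is the part strictly
before the last vertex `v`; it may be empty, in which case `v = v₀`). -/
def IsHistFrom (G : GameStruct P V) (v₀ : V) (h : List V) (v : V) : Prop :=
  List.Chain' G.E (h ++ [v]) ∧ (h ++ [v]).head? = some v₀

/-- The (finite) history `H` is compatible with the strategy `σ` of player `j`. -/
def CompatList (G : GameStruct P V) (σ : G.Strategy) (j : P) (H : List V) : Prop :=
  ∀ k u w, H[k]? = some u → H[k + 1]? = some w → G.control u = j →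
    w = σ.toFun (H.take k) u

/-- The history `H` is compatible with `σ̄_{-i}`, i.e. with every strategy of the
profile except possibly that of player `i`. -/
def CompatExcept (G : GameStruct P V) (i : P) (σ : G.Profile) (H : List V) : Prop :=
  ∀ j, j ≠ i → G.CompatList (σ j) j H

/-- A play `ρ` is `l`-consistent for the requirement `l : V → ℝ ∪ {±∞}`. -/
def Consistent (G : GameStruct P V) (l : V → EReal) (ρ : ℕ → V) : Prop :=
  ∀ n, l (ρ n) ≤ (G.payoff (G.control (ρ n)) (fun k => ρ (n + k)) : EReal)

variable [DecidableEq P]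

/-- The set of `l`-rational strategy profiles (for the players other than `i`) from `v`.
A profile is identified with a complete profile whose `i`-component is irrelevant. -/
def LamRat (G : GameStruct P V) (l : V → EReal) (i : P) (v : V) : Set G.Profile :=
  { σ | ∃ σi : G.Strategy, ∀ h w, G.IsHistFrom v h w → G.CompatExcept i σ (h ++ [w]) →
      G.Consistent l (G.play (Function.update σ i σi) h w) }

/-- `sup_{σ_i} μ_i(⟨σ̄_{-i}, σ_i⟩_v)`. -/
def valAgainst (G : GameStruct P V) (i : P) (σ : G.Profile) (v : V) : EReal :=
  ⨆ σi : G.Strategy, (G.payoff i (G.play (Function.update σ i σi) [] v) : EReal)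

/-- The negotiation function, with the convention `inf ∅ = +∞`. -/
def nego (G : GameStruct P V) (l : V → EReal) : V → EReal :=
  fun v => ⨅ σ ∈ G.LamRat l (G.control v) v, G.valAgainst (G.control v) σ v

/-- A game with steady negotiation. -/
def SteadyNego (G : GameStruct P V) : Prop :=
  ∀ (i : P) (v : V) (l : V → EReal),
    G.LamRat l i v = ∅ ∨
      ∃ σ ∈ G.LamRat l i v, ∀ τ ∈ G.LamRat l i v, G.valAgainst i σ v ≤ G.valAgainst i τ v

/-- Nash equilibrium in `G_{∥v₀}`. -/
def IsNE (G : GameStruct P V) (v₀ : V) (σ : G.Profile) : Prop :=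
  ∀ (i : P) (σ' : G.Strategy),
    G.payoff i (G.play (Function.update σ i σ') [] v₀) ≤ G.payoff i (G.play σ [] v₀)

/-- `ε`-subgame-perfect equilibrium in `G_{∥v₀}`. -/
def IsEpsSPE (G : GameStruct P V) (v₀ : V) (ε : ℝ) (σ : G.Profile) : Prop :=
  ∀ h v, G.IsHistFrom v₀ h v → ∀ (i : P) (σ' : G.Strategy),
    G.payoff i (prependList h (G.play (Function.update σ i σ') h v)) ≤
      G.payoff i (prependList h (G.play σ h v)) + ε

/-- `l` is an `ε`-fixed point of the negotiation function (`±∞` is within `ε` of itself). -/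
def IsEFix (G : GameStruct P V) (ε : ℝ) (l : V → EReal) : Prop :=
  ∀ v, l v - (ε : EReal) ≤ G.nego l v ∧ G.nego l v ≤ l v + (ε : EReal)

/-- Prefix-independent game. -/
def PrefixIndependent (G : GameStruct P V) : Prop :=
  ∀ (h : List V) (ρ : ℕ → V), G.IsHist h → G.IsPlay ρ → ∀ i,
    G.payoff i (prependList h ρ) = G.payoff i ρ

/-- Well-initialized game: every vertex is reachable from `v₀`. -/
def WellInit (G : GameStruct P V) (v₀ : V) : Prop :=
  ∀ v, Relation.ReflTransGen G.E v₀ v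

/-- `G` is the mean-payoff game given by the weight function `π`. -/
def IsMeanPayoff (G : GameStruct P V) (π : P → V → V → ℚ) : Prop :=
  ∀ i ρ, G.payoff i ρ =
    Filter.liminf
      (fun n : ℕ => (∑ k ∈ Finset.range n, (π i (ρ k) (ρ (k + 1)) : ℝ)) / n)
      Filter.atTop

end GameStruct

/-!
The witnessing profile follows `ξ` until somebody deviates. When the player controlling `u`
deviates there, the others switch to an `l`-rational profile from `u` whose value is the
minimum `nego l u` (steady negotiation; the set of such profiles is nonempty because `l u` is
bounded by a payoff, so `nego l u ≤ l u + ε < ⊤`), and the punished player is assumed to play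
the strategy witnessing rationality. By induction on histories, every history leaves the
players in one of these regimes, and in each of them the prescribed continuation is
`l`-consistent; in particular, conforming at `u` yields at least `l u`.
A deviating player gets at most `nego l u ≤ l u + ε`: while punished, his play is compatible
with the punishers' profile, so it is worth at most its value; his own deviations restart the
punishment only at vertices of strictly smaller negotiation value, which happens finitely
often since `V` is finite. Prefix independence reduces all comparisons to suffixes.
-/

namespace GameStruct

variable {P V : Type} {G : GameStruct P V}

section Plays

theorem prependList_nil (ρ : ℕ → V) : prependList [] ρ = ρ := by
  funext n
  simp [prependList]

theorem prependList_range_map_add (ρ : ℕ → V) (n : ℕ) :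
    prependList ((List.range n).map ρ) (fun k => ρ (n + k)) = ρ := by
  funext k
  simp only [prependList, List.length_map, List.length_range]
  split
  · simp
  · congr 1
    omega

theorem range_map_prependList (h : List V) (ρ : ℕ → V) (n : ℕ) :
    (List.range (h.length + n)).map (prependList h ρ) = h ++ (List.range n).map ρ := by
  rw [List.range_add, List.map_append, List.map_map]
  congr 1
  · apply List.ext_getElem <;> simp +contextual [prependList]
  · exact List.map_congr_left fun k _ => by simp [prependList]

theorem range_succ_map (ρ : ℕ → V) (n : ℕ) :
    (List.range (n + 1)).map ρ = (List.range n).map ρ ++ [ρ n] := by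
  rw [List.range_succ, List.map_append, List.map_singleton]

theorem IsPlay.shift {ρ : ℕ → V} (hρ : G.IsPlay ρ) (n : ℕ) :
    G.IsPlay (fun k => ρ (n + k)) :=
  fun k => by simpa only [add_assoc] using hρ (n + k)

theorem IsPlay.isChain_range_map {ρ : ℕ → V} (hρ : G.IsPlay ρ) (n : ℕ) :
    List.IsChain G.E ((List.range n).map ρ) :=
  List.isChain_iff_getElem.2 fun k hk => by simpa using hρ k

theorem isPlay_of_isChain_range_map {ρ : ℕ → V} (m : ℕ)
    (h : ∀ n, List.IsChain G.E ((List.range (n + m)).map ρ)) : G.IsPlay ρ := fun n => by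
  have := (h (n + 2)).getElem n (by simp; omega)
  simp only [List.getElem_map, List.getElem_range] at this
  exact this

theorem PrefixIndependent.payoff_prependList (hpi : G.PrefixIndependent) {h : List V}
    {ρ : ℕ → V} (hh : List.IsChain G.E h) (hρ : G.IsPlay ρ) (i : P) :
    G.payoff i (prependList h ρ) = G.payoff i ρ := by
  cases h with
  | nil => rw [prependList_nil]
  | cons x t => exact hpi _ ρ ⟨List.cons_ne_nil x t, hh⟩ hρ i

theorem PrefixIndependent.payoff_shift (hpi : G.PrefixIndependent) {ρ : ℕ → V}
    (hρ : G.IsPlay ρ) (n : ℕ) (i : P) : G.payoff i (fun k => ρ (n + k)) = G.payoff i ρ := by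
  simpa only [prependList_range_map_add] using
    (hpi.payoff_prependList (hρ.isChain_range_map n) (hρ.shift n) i).symm

theorem isHistFrom_nil (v : V) : G.IsHistFrom v [] v := ⟨List.isChain_singleton v, rfl⟩

theorem isHistFrom_snoc_iff {v₀ : V} (h : List V) (v w : V) :
    G.IsHistFrom v₀ (h ++ [v]) w ↔ G.IsHistFrom v₀ h v ∧ G.E v w := by
  have hhead : (h ++ [v] ++ [w]).head? = (h ++ [v]).head? := by cases h <;> rfl
  simp only [IsHistFrom, List.Chain', hhead, List.isChain_append (l₁ := h ++ [v]),
    List.getLast?_concat, Option.mem_def, Option.some.injEq, List.head?_cons,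
    List.isChain_singleton, true_and]
  constructor
  · rintro ⟨⟨hc, he⟩, hh⟩
    exact ⟨⟨hc, hh⟩, he v rfl w rfl⟩
  · rintro ⟨⟨hc, hh⟩, he⟩
    exact ⟨⟨hc, by rintro _ rfl _ rfl; exact he⟩, hh⟩

end Plays

section Profiles

variable (G) in
def playHist (σ : G.Profile) (h : List V) (v : V) (n : ℕ) : List V :=
  ((G.step σ)^[n] (h, v)).1

variable (σ : G.Profile) (h : List V) (v : V)

theorem play_zero : G.play σ h v 0 = v := rfl

theorem playHist_zero : G.playHist σ h v 0 = h := rfl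

theorem play_succ (n : ℕ) :
    G.play σ h v (n + 1) =
      (σ (G.control (G.play σ h v n))).toFun (G.playHist σ h v n) (G.play σ h v n) := by
  simp only [play, playHist, Function.iterate_succ_apply']
  rfl

theorem play_succ' (n : ℕ) :
    G.play σ h v (n + 1) = G.play σ (h ++ [v]) ((σ (G.control v)).toFun h v) n := by
  simp only [play, Function.iterate_succ_apply]
  rfl

theorem playHist_succ (n : ℕ) :
    G.playHist σ h v (n + 1) = G.playHist σ h v n ++ [G.play σ h v n] := by
  simp only [play, playHist, Function.iterate_succ_apply']
  rfl

theorem playHist_eq (n : ℕ) : G.playHist σ h v n = h ++ (List.range n).map (G.play σ h v) := by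
  induction n with
  | zero => simp [playHist]
  | succ n ih => rw [playHist_succ, ih, range_succ_map, List.append_assoc]

theorem play_add (n k : ℕ) :
    G.play σ h v (n + k) = G.play σ (G.playHist σ h v n) (G.play σ h v n) k := by
  simp only [play, playHist, add_comm n k, Function.iterate_add_apply]

theorem isPlay_play : G.IsPlay (G.play σ h v) := fun n => by
  rw [play_succ]
  exact Strategy.valid _ _ _

theorem IsHistFrom.playHist {v₀ : V} {h : List V} {v : V} (hh : G.IsHistFrom v₀ h v) (n : ℕ) :
    G.IsHistFrom v₀ (G.playHist σ h v n) (G.play σ h v n) := by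
  induction n with
  | zero => exact hh
  | succ n ih =>
    rw [playHist_succ, play_succ, isHistFrom_snoc_iff]
    exact ⟨ih, Strategy.valid _ _ _⟩

theorem PrefixIndependent.payoff_play (hpi : G.PrefixIndependent) (n : ℕ) (i : P) :
    G.payoff i (G.play σ h v) =
      G.payoff i (G.play σ (G.playHist σ h v n) (G.play σ h v n)) := by
  rw [← hpi.payoff_shift (isPlay_play σ h v) n]
  simp only [play_add]

theorem play_range_map_of_moves {ρ : ℕ → V}
    (hmove : ∀ n, (σ (G.control (ρ n))).toFun ((List.range n).map ρ) (ρ n) = ρ (n + 1))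
    (m k : ℕ) : G.play σ ((List.range m).map ρ) (ρ m) k = ρ (m + k) := by
  suffices (G.step σ)^[k] ((List.range m).map ρ, ρ m) =
      ((List.range (m + k)).map ρ, ρ (m + k)) from congrArg Prod.snd this
  induction k with
  | zero => rfl
  | succ k ih =>
    rw [Function.iterate_succ_apply', ih, step, hmove, ← range_succ_map]
    rfl

theorem play_update_eq_or_exists_deviation [DecidableEq P] (i : P) (τ : G.Strategy) :
    G.play (Function.update σ i τ) h v = G.play σ h v ∨
      ∃ n, G.playHist (Function.update σ i τ) h v n = G.playHist σ h v n ∧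
        G.play (Function.update σ i τ) h v n = G.play σ h v n ∧
        G.control (G.play σ h v n) = i ∧
        τ.toFun (G.playHist σ h v n) (G.play σ h v n) ≠
          (σ i).toFun (G.playHist σ h v n) (G.play σ h v n) := by
  refine or_iff_not_imp_right.2 fun hdev => funext fun n => ?_
  suffices G.playHist (Function.update σ i τ) h v n = G.playHist σ h v n ∧
      G.play (Function.update σ i τ) h v n = G.play σ h v n from this.2
  induction n with
  | zero => exact ⟨rfl, rfl⟩
  | succ n ih =>
    rw [playHist_succ, playHist_succ, play_succ, play_succ, ih.1, ih.2]
    refine ⟨rfl, ?_⟩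
    by_cases hi : G.control (G.play σ h v n) = i
    · rw [hi, Function.update_self]
      by_contra hne
      exact hdev ⟨n, ih.1, ih.2, hi, hne⟩
    · rw [Function.update_of_ne hi]

end Profiles

section Compatibility

theorem CompatList.eq_toFun_of_range_map {σ : G.Strategy} {j : P} {ρ : ℕ → V} {m n : ℕ}
    (hc : G.CompatList σ j ((List.range m).map ρ)) (hn : n + 1 < m)
    (hj : G.control (ρ n) = j) : ρ (n + 1) = σ.toFun ((List.range n).map ρ) (ρ n) := by
  have := hc n (ρ n) (ρ (n + 1)) (by simp [List.getElem?_range (by omega : n < m)])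
    (by simp [List.getElem?_range hn]) hj
  rwa [← List.map_take, List.take_range, Nat.min_eq_left (by omega)] at this

theorem CompatList.snoc {σ : G.Strategy} {j : P} {H : List V} {v w : V}
    (hc : G.CompatList σ j (H ++ [v])) (hw : G.control v = j → w = σ.toFun H v) :
    G.CompatList σ j (H ++ [v] ++ [w]) := by
  intro k u x hk hk1 hj
  have hlt : k < H.length + 1 := by
    have := (List.getElem?_eq_some_iff.1 hk1).1
    simp only [List.length_append, List.length_singleton] at this
    omega
  rcases Nat.lt_or_eq_of_le (Nat.le_of_lt_succ hlt) with hk' | rfl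
  · rw [List.getElem?_append_left (by simp; omega)] at hk hk1
    rw [List.take_append_of_le_length (by simp; omega)]
    exact hc k u x hk hk1 hj
  · simp at hk hk1
    subst hk hk1
    rw [List.append_assoc, List.take_left]
    exact hw hj

theorem CompatExcept.snoc {i : P} {σ : G.Profile} {H : List V} {v w : V}
    (hc : G.CompatExcept i σ (H ++ [v]))
    (hw : ∀ j, j ≠ i → G.control v = j → w = (σ j).toFun H v) :
    G.CompatExcept i σ (H ++ [v] ++ [w]) :=
  fun j hj => (hc j hj).snoc (hw j hj)

theorem compatExcept_pair (σ : G.Profile) (v w : V) :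
    G.CompatExcept (G.control v) σ ([] ++ [v] ++ [w]) :=
  CompatExcept.snoc (fun _ _ k _ _ _ hk1 => by simp at hk1)
    fun _ hj hv => absurd hv.symm hj

end Compatibility

section Values

open Classical in
variable (G) in
def followStrat (ρ : ℕ → V) : G.Strategy where
  toFun h v :=
    if h ++ [v] = (List.range (h.length + 1)).map ρ ∧ G.E v (ρ (h.length + 1)) then
      ρ (h.length + 1)
    else (G.total v).choose
  valid h v := by
    split_ifs with hc
    exacts [hc.2, (G.total v).choose_spec]

theorem followStrat_toFun_range_map {ρ : ℕ → V} (hρ : G.IsPlay ρ) (n : ℕ) :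
    (G.followStrat ρ).toFun ((List.range n).map ρ) (ρ n) = ρ (n + 1) := by
  simp [followStrat, range_succ_map, hρ n]

theorem payoff_le_valAgainst_of_compat [DecidableEq P] {σ : G.Profile} {i : P} {ρ : ℕ → V}
    (m : ℕ) (hρ : G.IsPlay ρ)
    (hcomp : ∀ n, G.CompatExcept i σ ((List.range (n + m)).map ρ)) :
    (G.payoff i ρ : EReal) ≤ G.valAgainst i σ (ρ 0) := by
  have hmove : ∀ n, (Function.update σ i (G.followStrat ρ) (G.control (ρ n))).toFun
      ((List.range n).map ρ) (ρ n) = ρ (n + 1) := fun n => by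
    by_cases hj : G.control (ρ n) = i
    · rw [hj, Function.update_self, followStrat_toFun_range_map hρ]
    · rw [Function.update_of_ne hj]
      exact ((hcomp (n + 2) _ hj).eq_toFun_of_range_map (by omega) rfl).symm
  have hplay : G.play (Function.update σ i (G.followStrat ρ)) [] (ρ 0) = ρ :=
    funext fun k => by simpa using play_range_map_of_moves _ hmove 0 k
  exact hplay ▸ le_iSup (fun τ => (G.payoff i (G.play (Function.update σ i τ) [] (ρ 0)) :
    EReal)) (G.followStrat ρ)

theorem PrefixIndependent.payoff_le_valAgainst [DecidableEq P] (hpi : G.PrefixIndependent)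
    {σ : G.Profile} {i : P} {a : V} {lh : List V} {D : ℕ → V} (hD : G.IsPlay D)
    (hhist : ∀ n, G.IsHistFrom a (lh ++ (List.range n).map D) (D n))
    (hcomp : ∀ n, G.CompatExcept i σ (lh ++ (List.range n).map D ++ [D n])) :
    (G.payoff i D : EReal) ≤ G.valAgainst i σ a := by
  set L := prependList lh D
  have key : ∀ n,
      (List.range (n + (lh.length + 1))).map L = lh ++ (List.range n).map D ++ [D n] := fun n => by
      rw [show n + (lh.length + 1) = lh.length + (n + 1) by omega, range_map_prependList,
        range_succ_map, List.append_assoc]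
  have hL0 : L 0 = a := by
    have := (hhist 0).2
    rw [← key 0, zero_add, List.head?_map, List.range_succ_eq_map] at this
    simpa using this
  have hlh : List.IsChain G.E lh :=
    (hhist 0).1.prefix ((List.prefix_append _ _).trans (List.prefix_append _ _))
  rw [← hpi.payoff_prependList hlh hD i, ← hL0]
  exact payoff_le_valAgainst_of_compat _
    (isPlay_of_isChain_range_map _ fun n => key n ▸ (hhist n).1)
    fun n => key n ▸ hcomp n

end Values

instance : Nonempty G.Strategy :=
  ⟨⟨fun _ v => (G.total v).choose, fun _ v => (G.total v).choose_spec⟩⟩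

section Punishment

variable [DecidableEq P] (l : V → EReal)

variable (G) in
def NegoAttained (a : V) : Prop :=
  ∃ σ ∈ G.LamRat l (G.control a) a, ∀ τ ∈ G.LamRat l (G.control a) a,
    G.valAgainst (G.control a) σ a ≤ G.valAgainst (G.control a) τ a

variable (G) in
def punisher (a : V) : G.Profile :=
  Classical.epsilon fun σ => σ ∈ G.LamRat l (G.control a) a ∧
    ∀ τ ∈ G.LamRat l (G.control a) a,
      G.valAgainst (G.control a) σ a ≤ G.valAgainst (G.control a) τ a

variable (G) in
def punishedStrat (a : V) : G.Strategy :=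
  Classical.epsilon fun σa => ∀ h w, G.IsHistFrom a h w →
    G.CompatExcept (G.control a) (G.punisher l a) (h ++ [w]) →
      G.Consistent l (G.play (Function.update (G.punisher l a) (G.control a) σa) h w)

variable {l}

theorem NegoAttained.punisher_mem {a : V} (ha : G.NegoAttained l a) :
    G.punisher l a ∈ G.LamRat l (G.control a) a :=
  (Classical.epsilon_spec ha).1

theorem NegoAttained.valAgainst_punisher {a : V} (ha : G.NegoAttained l a) :
    G.valAgainst (G.control a) (G.punisher l a) a = G.nego l a :=
  le_antisymm (le_iInf₂ (Classical.epsilon_spec ha).2) (iInf₂_le _ ha.punisher_mem)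

theorem NegoAttained.consistent_punishedStrat {a : V} (ha : G.NegoAttained l a) {h : List V}
    {w : V} (hh : G.IsHistFrom a h w)
    (hc : G.CompatExcept (G.control a) (G.punisher l a) (h ++ [w])) :
    G.Consistent l
      (G.play (Function.update (G.punisher l a) (G.control a) (G.punishedStrat l a)) h w) :=
  Classical.epsilon_spec ha.punisher_mem h w hh hc

theorem negoAttained_of_le_coe (hsteady : G.SteadyNego) {ε : ℝ} (hfix : G.IsEFix ε l) {a : V}
    {r : ℝ} (hle : l a ≤ r) : G.NegoAttained l a := by
  refine (hsteady (G.control a) a l).resolve_left fun hemp => ?_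
  have htop : G.nego l a = ⊤ := by simp [nego, hemp]
  have hlt : l a + ε < ⊤ :=
    EReal.add_lt_top (hle.trans_lt (EReal.coe_lt_top r)).ne (EReal.coe_ne_top ε)
  exact (hfix a).2.not_gt (htop ▸ hlt)

end Punishment

section Machine

variable [DecidableEq P] (l : V → EReal) (ξ : ℕ → V)

variable (G) in
/-- Mode `none`: follow `ξ`. Mode `some a`: punish the player controlling `a`, the punishment
having started at `a`; the list component of a state is the history since then. -/
def modeProfile : Option V → G.Profile
  | none => fun _ => G.followStrat ξ
  | some a => Function.update (G.punisher l a) (G.control a) (G.punishedStrat l a)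

open Classical in
variable (G) in
/-- A deviation of the punished player is tolerated unless it reaches a vertex of smaller
negotiation value: then punishments of a player strictly decrease that value, so they do not
restart infinitely often. -/
def nextState (s : Option V × List V) (v w : V) : Option V × List V :=
  if w = (G.modeProfile l ξ s.1 (G.control v)).toFun s.2 v then (s.1, s.2 ++ [v])
  else
    match s.1 with
    | none => (some v, [v])
    | some a =>
      if G.control v = G.control a ∧ G.nego l a ≤ G.nego l v then (some a, s.2 ++ [v])
      else (some v, [v])

variable (G) in
def stateOfReverse : List V → V → Option V × List V
  | [], _ => (none, [])
  | u :: r, v => G.nextState l ξ (stateOfReverse r u) u v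

variable (G) in
def stateOf (h : List V) (v : V) : Option V × List V := G.stateOfReverse l ξ h.reverse v

variable (G) in
def speProfile : G.Profile := fun _ =>
  ⟨fun h v => (G.modeProfile l ξ (G.stateOf l ξ h v).1 (G.control v)).toFun
      (G.stateOf l ξ h v).2 v,
    fun _ _ => Strategy.valid _ _ _⟩

theorem stateOf_nil (v : V) : G.stateOf l ξ [] v = (none, []) := rfl

theorem stateOf_snoc (h : List V) (v w : V) :
    G.stateOf l ξ (h ++ [v]) w = G.nextState l ξ (G.stateOf l ξ h v) v w := by
  simp [stateOf, stateOfReverse]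

theorem stateOf_snoc_speProfile (p : P) (h : List V) (v : V) :
    G.stateOf l ξ (h ++ [v]) ((G.speProfile l ξ p).toFun h v) =
      ((G.stateOf l ξ h v).1, (G.stateOf l ξ h v).2 ++ [v]) := by
  rw [stateOf_snoc, nextState]
  exact if_pos rfl

theorem play_speProfile (h : List V) (v : V) :
    G.play (G.speProfile l ξ) h v =
      G.play (G.modeProfile l ξ (G.stateOf l ξ h v).1) (G.stateOf l ξ h v).2 v := by
  funext n
  induction n generalizing h v with
  | zero => rfl
  | succ n ih => rw [play_succ', play_succ', ih, stateOf_snoc_speProfile]; rfl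

theorem play_modeProfile_none {ξ : ℕ → V} (hξ : G.IsPlay ξ) (n : ℕ) :
    G.play (G.modeProfile l ξ none) ((List.range n).map ξ) (ξ n) = fun k => ξ (n + k) :=
  funext <| play_range_map_of_moves _ (fun _ => followStrat_toFun_range_map hξ _) n

end Machine

section Invariant

variable [DecidableEq P] {l : V → EReal} {ξ : ℕ → V}

variable (G l ξ) in
def StateInv : Option V × List V → List V → V → Prop
  | (none, lh), h, v => lh = h ∧ ∃ n, h = (List.range n).map ξ ∧ v = ξ n
  | (some a, lh), _, v => G.NegoAttained l a ∧ G.IsHistFrom a lh v ∧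
      G.CompatExcept (G.control a) (G.punisher l a) (lh ++ [v])

theorem StateInv.consistent (hξ : G.IsPlay ξ) (hcons : G.Consistent l ξ) {h : List V} {v : V}
    (hs : G.StateInv l ξ (G.stateOf l ξ h v) h v) :
    G.Consistent l (G.play (G.speProfile l ξ) h v) := by
  rw [play_speProfile]
  generalize G.stateOf l ξ h v = s at hs ⊢
  rcases s with ⟨_ | a, lh⟩
  · obtain ⟨rfl, n, rfl, rfl⟩ := hs
    rw [play_modeProfile_none l hξ]
    intro k
    simpa only [add_assoc] using hcons (n + k)
  · exact hs.1.consistent_punishedStrat hs.2.1 hs.2.2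

theorem StateInv.le_payoff (hξ : G.IsPlay ξ) (hcons : G.Consistent l ξ) {h : List V} {v : V}
    (hs : G.StateInv l ξ (G.stateOf l ξ h v) h v) :
    l v ≤ G.payoff (G.control v) (G.play (G.speProfile l ξ) h v) := by
  simpa [play_zero] using hs.consistent hξ hcons 0

theorem stateInv_reset {a : V} (ha : G.NegoAttained l a) (h : List V) {w : V}
    (haw : G.E a w) : G.StateInv l ξ (some a, [a]) (h ++ [a]) w :=
  ⟨ha, (isHistFrom_snoc_iff [] a w).2 ⟨isHistFrom_nil a, haw⟩, compatExcept_pair _ a w⟩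

theorem StateInv.snoc_some {a : V} {lh h : List V} {v w : V}
    (hs : G.StateInv l ξ (some a, lh) h v) (hvw : G.E v w)
    (hw : ∀ j, j ≠ G.control a → G.control v = j → w = (G.punisher l a j).toFun lh v) :
    G.StateInv l ξ (some a, lh ++ [v]) (h ++ [v]) w :=
  ⟨hs.1, (isHistFrom_snoc_iff lh v w).2 ⟨hs.2.1, hvw⟩, hs.2.2.snoc hw⟩

theorem StateInv.nextState (hξ : G.IsPlay ξ) {s : Option V × List V} {h : List V} {v w : V}
    (hs : G.StateInv l ξ s h v) (hv : G.NegoAttained l v) (hvw : G.E v w) :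
    G.StateInv l ξ (G.nextState l ξ s v w) (h ++ [v]) w := by
  rcases s with ⟨_ | a, lh⟩ <;> unfold GameStruct.nextState <;> dsimp only
  · obtain ⟨rfl, n, rfl, rfl⟩ := hs
    split_ifs with hw
    · refine ⟨rfl, n + 1, (range_succ_map ξ n).symm, ?_⟩
      rwa [modeProfile, followStrat_toFun_range_map hξ] at hw
    · exact stateInv_reset hv _ hvw
  · split_ifs with hw htol
    · refine hs.snoc_some hvw fun j hj hvj => ?_
      rwa [hvj, modeProfile, Function.update_of_ne hj] at hw
    · exact hs.snoc_some hvw fun j hj hvj => absurd (hvj ▸ htol.1) hj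
    · exact stateInv_reset hv _ hvw

theorem stateInv_stateOf {v₀ : V} (hξ0 : ξ 0 = v₀) (hξ : G.IsPlay ξ)
    (hcons : G.Consistent l ξ) (hsteady : G.SteadyNego) {ε : ℝ} (hfix : G.IsEFix ε l)
    {h : List V} {v : V} (hh : G.IsHistFrom v₀ h v) : G.StateInv l ξ (G.stateOf l ξ h v) h v := by
  induction h using List.reverseRecOn generalizing v with
  | nil =>
    obtain rfl : v = v₀ := by simpa [IsHistFrom] using hh.2
    exact ⟨rfl, 0, rfl, hξ0.symm⟩
  | append_singleton h u ih =>
    obtain ⟨hh, huv⟩ := (isHistFrom_snoc_iff h u v).1 hh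
    have hs := ih hh
    rw [stateOf_snoc]
    exact hs.nextState hξ (negoAttained_of_le_coe hsteady hfix (hs.le_payoff hξ hcons)) huv

end Invariant

section Deviation

variable [DecidableEq P] {l : V → EReal} {ξ : ℕ → V} {v₀ : V}

theorem speProfile_toFun (p : P) (h : List V) (v : V) :
    (G.speProfile l ξ p).toFun h v =
      (G.modeProfile l ξ (G.stateOf l ξ h v).1 (G.control v)).toFun (G.stateOf l ξ h v).2 v :=
  rfl

theorem nextState_of_ne {s : Option V × List V} {v w : V}
    (hw : w ≠ (G.modeProfile l ξ s.1 (G.control v)).toFun s.2 v) :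
    ∃ a lh, G.nextState l ξ s v w = (some a, lh) ∧ G.control a = G.control v ∧
      G.nego l a ≤ G.nego l v := by
  rcases s with ⟨_ | a, lh⟩ <;> simp only [GameStruct.nextState, if_neg hw]
  · exact ⟨v, [v], rfl, rfl, le_rfl⟩
  · split_ifs with htol
    · exact ⟨a, _, rfl, htol.1.symm, htol.2⟩
    · exact ⟨v, [v], rfl, rfl, le_rfl⟩

theorem nextState_deviation_of_some (τ : G.Strategy) {i : P} {a v : V} {h lh : List V}
    (hs : G.stateOf l ξ h v = (some a, lh)) (hi : G.control a = i) :
    G.nextState l ξ (some a, lh) v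
        ((Function.update (G.speProfile l ξ) i τ (G.control v)).toFun h v) =
        (some a, lh ++ [v]) ∨
      G.nextState l ξ (some a, lh) v
          ((Function.update (G.speProfile l ξ) i τ (G.control v)).toFun h v) =
          (some v, [v]) ∧ G.control v = i ∧ G.nego l v < G.nego l a := by
  unfold GameStruct.nextState
  dsimp only
  split_ifs with hconf htol
  · exact Or.inl rfl
  · exact Or.inl rfl
  · have hvi : G.control v = i := by
      by_contra hvi
      exact hconf (by rw [Function.update_of_ne hvi, speProfile_toFun, hs])
    exact Or.inr ⟨rfl, hvi, lt_of_not_ge fun hle => htol ⟨hvi.trans hi.symm, hle⟩⟩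

theorem stateOf_deviation_play (τ : G.Strategy) {i : P} {a v : V} {h lh : List V} {D : ℕ → V}
    (hD : D = G.play (Function.update (G.speProfile l ξ) i τ) h v)
    (hs : G.stateOf l ξ h v = (some a, lh)) (hi : G.control a = i) (n : ℕ) :
    G.stateOf l ξ (h ++ (List.range n).map D) (D n) = (some a, lh ++ (List.range n).map D) ∨
      ∃ m, G.stateOf l ξ (h ++ (List.range (m + 1)).map D) (D (m + 1)) = (some (D m), [D m]) ∧
        G.control (D m) = i ∧ G.nego l (D m) < G.nego l a := by
  induction n with
  | zero => exact Or.inl (by simpa [hD, play_zero] using hs)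
  | succ n ih =>
    rcases ih with hn | hreset
    · have hstep : D (n + 1) =
          (Function.update (G.speProfile l ξ) i τ (G.control (D n))).toFun
            (h ++ (List.range n).map D) (D n) := by
        rw [hD, play_succ, playHist_eq]
      have hsnoc : G.stateOf l ξ (h ++ (List.range (n + 1)).map D) (D (n + 1)) =
          G.nextState l ξ (some a, lh ++ (List.range n).map D) (D n) (D (n + 1)) := by
        rw [range_succ_map, ← List.append_assoc, stateOf_snoc, hn]
      rw [hsnoc, hstep]
      rcases nextState_deviation_of_some τ hn hi with hc | ⟨hr, hDi, hlt⟩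
      · exact Or.inl (by rw [hc, range_succ_map, List.append_assoc])
      · exact Or.inr ⟨n, hsnoc.trans (hstep ▸ hr), hDi, hlt⟩
    · exact Or.inr hreset

theorem payoff_deviation_le_nego [Finite V] (hpi : G.PrefixIndependent)
    (hinv : ∀ h v, G.IsHistFrom v₀ h v → G.StateInv l ξ (G.stateOf l ξ h v) h v)
    (τ : G.Strategy) {i : P} {a v : V} {h lh : List V} (hh : G.IsHistFrom v₀ h v)
    (hs : G.stateOf l ξ h v = (some a, lh)) (hi : G.control a = i) :
    (G.payoff i (G.play (Function.update (G.speProfile l ξ) i τ) h v) : EReal) ≤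
      G.nego l a := by
  induction hN : {x | G.nego l x < G.nego l a}.ncard using Nat.strong_induction_on
    generalizing h v a lh with
  | _ N IH =>
  set D := G.play (Function.update (G.speProfile l ξ) i τ) h v with hD
  have hhist : ∀ n, G.IsHistFrom v₀ (h ++ (List.range n).map D) (D n) := fun n => by
    simpa only [playHist_eq] using hh.playHist (Function.update (G.speProfile l ξ) i τ) n
  by_cases hreset : ∃ m, G.stateOf l ξ (h ++ (List.range (m + 1)).map D) (D (m + 1)) =
      (some (D m), [D m]) ∧ G.control (D m) = i ∧ G.nego l (D m) < G.nego l a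
  · obtain ⟨m, hsm, hmi, hlt⟩ := hreset
    have hcard : {x | G.nego l x < G.nego l (D m)}.ncard < N :=
      hN ▸ Set.ncard_lt_ncard
        ⟨fun _ hx => lt_trans hx hlt, fun hsub => lt_irrefl (G.nego l (D m)) (hsub hlt)⟩
    calc (G.payoff i D : EReal)
        = G.payoff i (G.play (Function.update (G.speProfile l ξ) i τ)
            (h ++ (List.range (m + 1)).map D) (D (m + 1))) := by
          rw [hpi.payoff_play _ h v (m + 1) i, playHist_eq]
      _ ≤ G.nego l (D m) := IH _ hcard (hhist (m + 1)) hsm hmi rfl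
      _ ≤ G.nego l a := hlt.le
  · have hinvD : ∀ n, G.StateInv l ξ (some a, lh ++ (List.range n).map D)
        (h ++ (List.range n).map D) (D n) := fun n => by
      rw [← (stateOf_deviation_play τ hD hs hi n).resolve_right hreset]
      exact hinv _ _ (hhist n)
    subst hi
    rw [← (hinvD 0).1.valAgainst_punisher]
    exact hpi.payoff_le_valAgainst (isPlay_play _ h v)
      (fun n => (hinvD n).2.1) fun n => (hinvD n).2.2

theorem payoff_deviation_le [Finite V] (hpi : G.PrefixIndependent) {ε : ℝ}
    (hfix : G.IsEFix ε l)
    (hinv : ∀ h v, G.IsHistFrom v₀ h v → G.StateInv l ξ (G.stateOf l ξ h v) h v)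
    (τ : G.Strategy) {i : P} {h : List V} {u : V} (hh : G.IsHistFrom v₀ h u)
    (hi : G.control u = i) (hdev : τ.toFun h u ≠ (G.speProfile l ξ i).toFun h u) :
    (G.payoff i (G.play (Function.update (G.speProfile l ξ) i τ) h u) : EReal) ≤ l u + ε := by
  set σ := Function.update (G.speProfile l ξ) i τ
  subst hi
  obtain ⟨a, lh, hs, hau, hle⟩ := nextState_of_ne (s := G.stateOf l ξ h u) hdev
  have hs1 : G.stateOf l ξ (G.playHist σ h u 1) (G.play σ h u 1) = (some a, lh) := by
    rw [playHist_succ, play_succ, playHist_zero, play_zero, stateOf_snoc]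
    simpa only [σ, Function.update_self] using hs
  calc (G.payoff (G.control u) (G.play σ h u) : EReal)
      = G.payoff (G.control u) (G.play σ (G.playHist σ h u 1) (G.play σ h u 1)) := by
        rw [hpi.payoff_play σ h u 1]
    _ ≤ G.nego l a := payoff_deviation_le_nego hpi hinv τ (hh.playHist σ 1) hs1 hau
    _ ≤ G.nego l u := hle
    _ ≤ l u + ε := (hfix u).2

end Deviation

end GameStruct

open GameStruct in
theorem consistent_eps_fixed_point_is_epsSPE_play_general
    {P V : Type} [Fintype V] [DecidableEq P]
    (G : GameStruct P V) (v₀ : V) (hpi : G.PrefixIndependent)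
    (hsteady : G.SteadyNego) (ε : ℝ) (hε : 0 ≤ ε)
    (l : V → EReal) (hfix : G.IsEFix ε l)
    (ξ : ℕ → V) (hξ : G.IsPlayFrom v₀ ξ) (hcons : G.Consistent l ξ) :
    ∃ σ : G.Profile, G.IsEpsSPE v₀ ε σ ∧ G.play σ [] v₀ = ξ := by
  have hinv : ∀ h v, G.IsHistFrom v₀ h v → G.StateInv l ξ (G.stateOf l ξ h v) h v :=
    fun _ _ => stateInv_stateOf hξ.1 hξ.2 hcons hsteady hfix
  refine ⟨G.speProfile l ξ, fun h v hh i τ => ?_, ?_⟩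
  · have hchain : List.IsChain G.E h := (List.isChain_append.1 hh.1).1
    rw [hpi.payoff_prependList hchain (isPlay_play _ h v),
      hpi.payoff_prependList hchain (isPlay_play _ h v)]
    obtain heq | ⟨n, hhist, hplay, hi, hdev⟩ :=
      play_update_eq_or_exists_deviation (G.speProfile l ξ) h v i τ
    · rw [heq]
      linarith
    · rw [hpi.payoff_play _ h v n, hpi.payoff_play (G.speProfile l ξ) h v n, hhist, hplay]
      have hn := hh.playHist (G.speProfile l ξ) n
      have hlow := (hinv _ _ hn).le_payoff hξ.2 hcons
      have hup := payoff_deviation_le hpi hfix hinv τ hn hi hdev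
      rw [hi] at hlow
      exact_mod_cast hup.trans (add_le_add hlow le_rfl)
  · rw [← hξ.1, play_speProfile, stateOf_nil]
    simpa using play_modeProfile_none l hξ.2 0

open GameStruct in
/-- In a well-initialized prefix-independent game with steady negotiation,
if `λ` is an `ε`-fixed point of the negotiation function, then every `λ`-consistent play
from `v₀` is the outcome of some `ε`-SPE. -/
theorem consistent_eps_fixed_point_is_epsSPE_play
    {P V : Type} [Fintype P] [Fintype V] [DecidableEq P]
    (G : GameStruct P V) (v₀ : V) (hwi : G.WellInit v₀) (hpi : G.PrefixIndependent)
    (hsteady : G.SteadyNego) (ε : ℝ) (hε : 0 ≤ ε)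
    (l : V → EReal) (hfix : G.IsEFix ε l)
    (ξ : ℕ → V) (hξ : G.IsPlayFrom v₀ ξ) (hcons : G.Consistent l ξ) :
    ∃ σ : G.Profile, G.IsEpsSPE v₀ ε σ ∧ G.play σ [] v₀ = ξ :=
  consistent_eps_fixed_point_is_epsSPE_play_general G v₀ hpi hsteady ε hε l hfix ξ hξ hcons
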